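/- Let δ ∈ (1/2, 1], let k be a positive integer, and let (H, L) ∈ Λ^δ(k). Then λ(L < 1/2) ≤ (1 − δ) · λ(H > 1/2), where λ is Lebesgue measure. -/

import Mathlib

open MeasureTheory
open scoped ENNReal

noncomputable section

/-- A right-continuous step function on `[0, ∞)` with finitely many steps. -/
def IsRCStep (f : ℝ → ℝ) : Prop :=
  ∃ (k : ℕ) (t : Fin (k + 1) → ℝ) (c : Fin (k + 1) → ℝ),
    t 0 = 0 ∧ StrictMono t ∧
    (∀ i : Fin k, ∀ x ∈ Set.Ico (t i.castSucc) (t i.succ), f x = c i.castSucc) ∧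
    (∀ x ∈ Set.Ici (t (Fin.last k)), f x = c (Fin.last k))

/-- The class `Λ(k)` of pairs of functions `(H, L) : [0, ∞) → [0, 1]²`. -/
def Lam (k : ℕ) (H L : ℝ → ℝ) : Prop :=
  (∀ x ∈ Set.Ici (0 : ℝ), 0 ≤ L x ∧ L x ≤ 1 / 2 ∧ 1 / 2 ≤ H x ∧ H x ≤ 1) ∧
  IsRCStep H ∧ IsRCStep L ∧
  volume ({x | 1 / 2 < H x} ∩ Set.Ici 0) + volume ({x | L x < 1 / 2} ∩ Set.Ici 0) ≤
    (k : ℝ≥0∞) / 2 ∧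
  ∀ y ∈ Set.Ioc (0 : ℝ) 1,
    ENNReal.ofReal ((1 - y) / y) *
        (volume ({x | H x = y} ∩ Set.Ici 0) + volume ({x | L x = y} ∩ Set.Ici 0)) =
      volume ({x | H x = 1 - y} ∩ Set.Ici 0) + volume ({x | L x = 1 - y} ∩ Set.Ici 0)

/-- The class `Λ^δ(k)`. -/
def LamDelta (δ : ℝ) (k : ℕ) (H L : ℝ → ℝ) : Prop :=
  Lam k H L ∧
  {x ∈ Set.Ici (0 : ℝ) | H x ∈ Set.Ioo (1 / 2) δ} = ∅ ∧
  {x ∈ Set.Ici (0 : ℝ) | L x ∈ Set.Ioo (1 - δ) (1 / 2)} = ∅ ∧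
  {x ∈ Set.Ici (0 : ℝ) | L x + δ ≤ H x} = {x ∈ Set.Ici (0 : ℝ) | L x < 1 / 2}

/-!
On `{L < 1/2}` the condition `H ≥ L + δ` gives `1 ≤ (1 - L) + (H - δ)`, so
`λ(L < 1/2) ≤ ∫_{L < 1/2} (1 - L) + ∫ (H - δ)⁺`. Condition (4) with `H ≥ 1/2 ≥ L` says that
for `0 < y < 1/2` the mass `(1 - y) λ(L = y)` equals `y λ(H = 1 - y)`, and at `y = 1` it forces
`λ(L = 0) = 0`; reflecting the levels `y ↦ 1 - y` therefore gives
`∫_{L < 1/2} (1 - L) ≤ ∫_{H > 1/2} (1 - H)`. Finally `H` avoids `(1/2, δ)`, so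
`(1 - H) + (H - δ)⁺` is `1 - δ` on `{H > 1/2}` and `0` elsewhere.
-/

open Set ENNReal

theorem Ici_subset_iUnion_Ico_union_Ici {X : Type*} [LinearOrder X] {k : ℕ}
    (t : Fin (k + 1) → X) :
    Ici (t 0) ⊆ (⋃ i : Fin k, Ico (t i.castSucc) (t i.succ)) ∪ Ici (t (Fin.last k)) := by
  intro x hx
  rcases lt_or_ge x (t (Fin.last k)) with hlt | hge
  · set a : ℕ → X := fun n => t ⟨min n k, by omega⟩
    have hx' : x ∈ Ico (a 0) (a k) := by simpa [a, Fin.last] using And.intro hx hlt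
    obtain ⟨i, hi, hxi⟩ := mem_iUnion₂.1 (Ico_subset_biUnion_Ico k a hx')
    rw [Finset.mem_range] at hi
    refine Or.inl (mem_iUnion.2 ⟨⟨i, hi⟩, ?_⟩)
    simpa [a, hi.le, Nat.succ_le_of_lt hi] using hxi
  · exact Or.inr hge

namespace IsRCStep

variable {f : ℝ → ℝ}

theorem exists_finite_cover (hf : IsRCStep f) :
    ∃ (ι : Type) (_ : Finite ι) (I : ι → Set ℝ) (c : ι → ℝ),
      (∀ i, MeasurableSet (I i)) ∧ ⋃ i, I i = Ici 0 ∧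
        ∀ i, EqOn f (fun _ => c i) (I i) := by
  obtain ⟨k, t, c, ht0, ht, hpiece, hlast⟩ := hf
  have hpos : ∀ i, 0 ≤ t i := fun i => ht0 ▸ ht.monotone (Fin.zero_le i)
  refine ⟨Option (Fin k), inferInstance,
    fun o => o.elim (Ici (t (Fin.last k))) fun i => Ico (t i.castSucc) (t i.succ),
    fun o => o.elim (c (Fin.last k)) fun i => c i.castSucc, ?_, ?_, ?_⟩
  · rintro (_ | i)
    exacts [measurableSet_Ici, measurableSet_Ico]
  · refine (iUnion_subset ?_).antisymm ?_
    · rintro (_ | i) x hx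
      exacts [(hpos _).trans hx, (hpos _).trans hx.1]
    · rw [iUnion_option, union_comm, ← ht0]
      exact Ici_subset_iUnion_Ico_union_Ici t
  · rintro (_ | i) x hx
    exacts [hlast x hx, hpiece i x hx]

theorem finite_image_Ici (hf : IsRCStep f) : (f '' Ici 0).Finite := by
  obtain ⟨ι, _, I, c, -, hU, hc⟩ := hf.exists_finite_cover
  rw [← hU, image_iUnion]
  exact finite_iUnion fun i => (finite_singleton (c i)).subset (image_subset_iff.2 (hc i))

theorem measurableSet_preimage_inter_Ici (hf : IsRCStep f) (s : Set ℝ) :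
    MeasurableSet (f ⁻¹' s ∩ Ici 0) := by
  classical
  obtain ⟨ι, _, I, c, hI, hU, hc⟩ := hf.exists_finite_cover
  rw [← hU, inter_iUnion]
  refine MeasurableSet.iUnion fun i => ?_
  rw [inter_comm, (hc i).inter_preimage_eq, preimage_const]
  split_ifs
  exacts [(hI i).inter MeasurableSet.univ, (hI i).inter MeasurableSet.empty]

theorem measurable_comp_val (hf : IsRCStep f) : Measurable fun x : Ici (0 : ℝ) => f x := by
  intro s _
  have := measurable_subtype_coe (p := (· ∈ Ici (0 : ℝ)))
    (hf.measurableSet_preimage_inter_Ici s)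
  rwa [preimage_inter, Subtype.coe_preimage_self, inter_univ] at this

theorem finite_range_comp_val (hf : IsRCStep f) : (range fun x : Ici (0 : ℝ) => f x).Finite := by
  rw [← image_eq_range]
  exact hf.finite_image_Ici

end IsRCStep

section

variable {α : Type*} [MeasurableSpace α] {μ : Measure α}

theorem comap_subtype_val_preimage {s : Set α} (hs : MeasurableSet s) (μ : Measure α)
    (t : Set α) : μ.comap ((↑) : s → α) ((↑) ⁻¹' t) = μ (t ∩ s) := by
  rw [comap_subtype_coe_apply hs, Subtype.image_preimage_coe, inter_comm]

theorem lintegral_comp_eq_tsum {β : Type*} [MeasurableSpace β] [MeasurableSingletonClass β]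
    {f : α → β} (hf : Measurable f) (hfc : (range f).Countable) (g : β → ℝ≥0∞) :
    ∫⁻ x, g (f x) ∂μ = ∑' y, g y * μ {x | f x = y} := by
  calc ∫⁻ x, g (f x) ∂μ = ∫⁻ x in ⋃ y ∈ range f, f ⁻¹' {y}, g (f x) ∂μ := by
        rw [biUnion_preimage_singleton, preimage_range, Measure.restrict_univ]
    _ = ∑' y : range f, ∫⁻ x in f ⁻¹' {(y : β)}, g (f x) ∂μ :=
        lintegral_biUnion hfc (fun y _ => hf (measurableSet_singleton y))
          (pairwiseDisjoint_fiber f _) _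
    _ = ∑' y : range f, g y * μ (f ⁻¹' {(y : β)}) := by
        congr 1 with y
        rw [setLIntegral_congr_fun (hf (measurableSet_singleton _)) fun x hx => by rw [hx],
          setLIntegral_const]
    _ = ∑' y, g y * μ {x | f x = y} := by
        refine tsum_subtype_eq_of_support_subset (f := fun y => g y * μ (f ⁻¹' {y}))
          fun y hy => ?_
        by_contra hyf
        simp [preimage_singleton_eq_empty.2 hyf] at hy

local notation "φ" => Set.indicator (Iio (1 / 2 : ℝ)) fun y : ℝ => ENNReal.ofReal (1 - y)
local notation "χ" => Set.indicator (Ioi (1 / 2 : ℝ)) fun w : ℝ => ENNReal.ofReal (1 - w)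

variable {H L : α → ℝ} {δ : ℝ}

theorem measure_setOf_lt_half_le_lintegral_add (hL : Measurable L)
    (hLH : ∀ x, L x < 1 / 2 → L x + δ ≤ H x) :
    μ {x | L x < 1 / 2} ≤
      ∫⁻ x, φ (L x) ∂μ + ∫⁻ x, ENNReal.ofReal (H x - δ) ∂μ := by
  have hφL : Measurable fun x => φ (L x) :=
    (Measurable.indicator (by fun_prop) measurableSet_Iio).comp hL
  rw [← lintegral_add_left hφL,
    ← lintegral_indicator_one (s := {x | L x < 1 / 2}) (hL measurableSet_Iio)]
  refine lintegral_mono fun x => ?_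
  by_cases hx : L x < 1 / 2
  · rw [indicator_of_mem (show x ∈ {x | L x < 1 / 2} from hx),
      indicator_of_mem (show L x ∈ Iio (1 / 2) from hx)]
    calc (1 : ℝ≥0∞) = ENNReal.ofReal 1 := ofReal_one.symm
      _ ≤ ENNReal.ofReal ((1 - L x) + (H x - δ)) := ofReal_le_ofReal (by linarith [hLH x hx])
      _ ≤ _ := ofReal_add_le
  · rw [indicator_of_notMem (show x ∉ {x | L x < 1 / 2} from hx)]
    exact zero_le

theorem lintegral_indicator_Iio_le_lintegral_indicator_Ioi (hH : Measurable H)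
    (hL : Measurable L) (hHc : (range H).Countable) (hLc : (range L).Countable)
    (hL0 : ∀ x, 0 ≤ L x) (hLhalf : ∀ x, L x ≤ 1 / 2) (hHhalf : ∀ x, 1 / 2 ≤ H x)
    (hsymm : ∀ y ∈ Ioc (0 : ℝ) 1,
      ENNReal.ofReal ((1 - y) / y) * (μ {x | H x = y} + μ {x | L x = y}) =
        μ {x | H x = 1 - y} + μ {x | L x = 1 - y}) :
    ∫⁻ x, φ (L x) ∂μ ≤ ∫⁻ x, χ (H x) ∂μ := by
  have hL_zero : μ {x | L x = 0} = 0 := by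
    have h := hsymm 1 ⟨one_pos, le_rfl⟩
    rw [sub_self, zero_div, ENNReal.ofReal_zero, zero_mul, eq_comm, add_eq_zero] at h
    exact h.2
  have hterm : ∀ y, φ y * μ {x | L x = y} ≤ χ (1 - y) * μ {x | H x = 1 - y} := by
    intro y
    rcases le_or_gt (1 / 2) y with hy | hy
    · rw [indicator_of_notMem (show y ∉ Iio (1 / 2) from not_lt.2 hy), zero_mul]
      exact zero_le
    rcases le_or_gt y 0 with hy0 | hy0
    · have : μ {x | L x = y} = 0 := measure_mono_null (fun x (hx : L x = y) =>
        (le_antisymm (hx ▸ hy0) (hL0 x) : L x = 0)) hL_zero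
      simp [this]
    have hH_y : {x | H x = y} = ∅ := eq_empty_of_forall_notMem fun x (hx : H x = y) => by
      linarith [hHhalf x]
    have hL_1y : {x | L x = 1 - y} = ∅ := eq_empty_of_forall_notMem fun x (hx : L x = 1 - y) => by
      linarith [hLhalf x]
    have h := hsymm y ⟨hy0, by linarith⟩
    rw [hH_y, hL_1y, measure_empty, zero_add, add_zero] at h
    rw [indicator_of_mem (show y ∈ Iio (1 / 2) from hy),
      indicator_of_mem (show 1 - y ∈ Ioi (1 / 2) by rw [mem_Ioi]; linarith),
      _root_.sub_sub_cancel, ← h, ← mul_assoc, ← ofReal_mul hy0.le,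
      mul_div_cancel₀ _ hy0.ne']
  rw [lintegral_comp_eq_tsum hL hLc, lintegral_comp_eq_tsum hH hHc]
  exact (ENNReal.tsum_le_tsum hterm).trans_eq
    ((Equiv.subLeft (1 : ℝ)).tsum_eq fun w => χ w * μ {x | H x = w})

theorem lintegral_indicator_Ioi_add_lintegral (hδ : 1 / 2 < δ) (hH : Measurable H)
    (hH1 : ∀ x, H x ≤ 1) (hgap : ∀ x, H x ∉ Ioo (1 / 2) δ) :
    ∫⁻ x, χ (H x) ∂μ + ∫⁻ x, ENNReal.ofReal (H x - δ) ∂μ =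
      ENNReal.ofReal (1 - δ) * μ {x | 1 / 2 < H x} := by
  have hχH : Measurable fun x => χ (H x) :=
    (Measurable.indicator (by fun_prop) measurableSet_Ioi).comp hH
  change _ = _ * μ (H ⁻¹' Ioi (1 / 2))
  rw [← lintegral_add_left hχH, ← lintegral_indicator_const_comp hH measurableSet_Ioi]
  refine lintegral_congr fun x => ?_
  by_cases hx : H x ∈ Ioi (1 / 2)
  · have hδH : δ ≤ H x := not_lt.1 fun h => hgap x ⟨hx, h⟩
    rw [indicator_of_mem hx, indicator_of_mem hx,
      ← ofReal_add (by linarith [hH1 x]) (by linarith), sub_add_sub_cancel]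
  · have hHδ : H x - δ ≤ 0 := by rw [mem_Ioi, not_lt] at hx; linarith
    rw [indicator_of_notMem hx, indicator_of_notMem hx, ofReal_of_nonpos hHδ, zero_add]

theorem measure_setOf_lt_half_le (hδ : 1 / 2 < δ) (hH : Measurable H) (hL : Measurable L)
    (hHc : (range H).Countable) (hLc : (range L).Countable)
    (hbound : ∀ x, 0 ≤ L x ∧ L x ≤ 1 / 2 ∧ 1 / 2 ≤ H x ∧ H x ≤ 1)
    (hsymm : ∀ y ∈ Ioc (0 : ℝ) 1,
      ENNReal.ofReal ((1 - y) / y) * (μ {x | H x = y} + μ {x | L x = y}) =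
        μ {x | H x = 1 - y} + μ {x | L x = 1 - y})
    (hgap : ∀ x, H x ∉ Ioo (1 / 2) δ) (hLH : ∀ x, L x < 1 / 2 → L x + δ ≤ H x) :
    μ {x | L x < 1 / 2} ≤ ENNReal.ofReal (1 - δ) * μ {x | 1 / 2 < H x} :=
  calc μ {x | L x < 1 / 2}
      ≤ ∫⁻ x, φ (L x) ∂μ + ∫⁻ x, ENNReal.ofReal (H x - δ) ∂μ :=
        measure_setOf_lt_half_le_lintegral_add hL hLH
    _ ≤ ∫⁻ x, χ (H x) ∂μ + ∫⁻ x, ENNReal.ofReal (H x - δ) ∂μ :=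
        add_le_add (lintegral_indicator_Iio_le_lintegral_indicator_Ioi hH hL hHc hLc
          (fun x => (hbound x).1) (fun x => (hbound x).2.1) (fun x => (hbound x).2.2.1) hsymm)
          le_rfl
    _ = ENNReal.ofReal (1 - δ) * μ {x | 1 / 2 < H x} :=
        lintegral_indicator_Ioi_add_lintegral hδ hH (fun x => (hbound x).2.2.2) hgap

end

theorem measure_L_lt_half_le_general (δ : ℝ) (hδ : δ ∈ Set.Ioc (1 / 2 : ℝ) 1) (k : ℕ)
    (H L : ℝ → ℝ) (hHL : LamDelta δ k H L) :
    (volume ({x | L x < 1 / 2} ∩ Set.Ici 0)).toReal ≤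
      (1 - δ) * (volume ({x | 1 / 2 < H x} ∩ Set.Ici 0)).toReal := by
  obtain ⟨⟨hbound, hH, hL, hvol, hsymm⟩, hgap, -, hLH⟩ := hHL
  -- `H` and `L` are unconstrained on `(-∞, 0)`, so we work on the subtype `Ici 0`.
  have hcomap := comap_subtype_val_preimage (measurableSet_Ici (a := (0 : ℝ))) volume
  have key : volume ({x | L x < 1 / 2} ∩ Ici 0) ≤
      ENNReal.ofReal (1 - δ) * volume ({x | 1 / 2 < H x} ∩ Ici 0) := by
    rw [← hcomap, ← hcomap]
    refine measure_setOf_lt_half_le (H := fun x : Ici (0 : ℝ) => H x) (L := fun x => L x) hδ.1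
      hH.measurable_comp_val hL.measurable_comp_val hH.finite_range_comp_val.countable
      hL.finite_range_comp_val.countable (fun x => hbound x x.2) (fun y hy => ?_)
      (fun x hx => eq_empty_iff_forall_notMem.1 hgap x ⟨x.2, hx⟩)
      (fun x hx => ((Set.ext_iff.1 hLH x).2 ⟨x.2, hx⟩).2)
    have h := hsymm y hy
    simp only [← hcomap] at h
    exact h
  have hB : volume ({x | 1 / 2 < H x} ∩ Ici 0) ≠ ⊤ :=
    ne_top_of_le_ne_top (div_ne_top (natCast_ne_top k) two_ne_zero) (le_self_add.trans hvol)
  calc _ ≤ (ENNReal.ofReal (1 - δ) * volume ({x | 1 / 2 < H x} ∩ Ici 0)).toReal :=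
        toReal_mono (mul_ne_top ofReal_ne_top hB) key
    _ = _ := by rw [toReal_mul, toReal_ofReal (sub_nonneg.2 hδ.2)]

theorem measure_L_lt_half_le (δ : ℝ) (hδ : δ ∈ Set.Ioc (1 / 2 : ℝ) 1) (k : ℕ) (hk : 1 ≤ k)
    (H L : ℝ → ℝ) (hHL : LamDelta δ k H L) :
    (volume ({x | L x < 1 / 2} ∩ Set.Ici 0)).toReal ≤
      (1 - δ) * (volume ({x | 1 / 2 < H x} ∩ Set.Ici 0)).toReal :=
  measure_L_lt_half_le_general δ hδ k H L hHL
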